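/- arXiv:1910.09071 — 2 statements merged into one kernel-verified Lean document; each statement's English description precedes it below -/
import Mathlib

section
/- Let g be a polynomial of degree N with g(0) ≠ 0 that does not vanish on the closed disk of radius b > 1. Then for every z with |z| ≤ 1, writing f(z) = log(g(z)) (a branch analytic on the disk), the error of truncating the Taylor series of f at 0 after degree K satisfies |f(z) − Σ_{k=0}^{K} (f^{(k)}(0)/k!) z^k| ≤ (N/(K+1)) · 1/(b^K (b−1)). -/
/-!
Every root `ζ` of `g` satisfies `‖ζ‖ ≥ b`, so on the disc `‖w‖ < b` the function
`f 0 + ∑_ζ log (1 - w / ζ)` is holomorphic with power series `∑_{n ≥ 1} -(∑_ζ ζ⁻ⁿ) / n · wⁿ`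
(plus the constant `f 0`), and it has the same exponential as `f`, namely
`g(w) = g(0) ∏_ζ (1 - w / ζ)`. Two holomorphic logarithms of the same function on a connected
set which agree at one point coincide, so these are the Taylor coefficients of `f`. The `n`-th
one is bounded by `N / (n bⁿ)`, and summing the geometric tail from `K + 1` on gives the bound.
-/

open Metric Polynomial Complex

theorem Polynomial.le_norm_of_mem_roots {K : Type*} [NormedField K] {p : K[X]} {b : ℝ}
    (hp : ∀ z ∈ ball (0 : K) b, p.eval z ≠ 0) {ζ : K} (hζ : ζ ∈ p.roots) : b ≤ ‖ζ‖ :=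
  not_lt.1 fun h => hp ζ (mem_ball_zero_iff.2 h) (isRoot_of_mem_roots hζ)

theorem Polynomial.Splits.eval_eq_eval_zero_mul_prod_one_sub_div {K : Type*} [Field K] {p : K[X]}
    (hp : p.Splits) (h0 : p.eval 0 ≠ 0) (x : K) :
    p.eval x = p.eval 0 * (p.roots.map fun ζ => 1 - x / ζ).prod := by
  rw [hp.eval_eq_prod_roots x, hp.eval_eq_prod_roots 0, mul_assoc, ← Multiset.prod_map_mul]
  congr 2
  refine Multiset.map_congr rfl fun ζ hζ => ?_
  have hζ0 : ζ ≠ 0 := by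
    rintro rfl
    exact h0 (isRoot_of_mem_roots hζ)
  field_simp
  ring

theorem HasFPowerSeriesAt.iteratedDeriv_div_factorial_eq
    {𝕜 : Type*} [NontriviallyNormedField 𝕜] [CompleteSpace 𝕜] [CharZero 𝕜]
    {f : 𝕜 → 𝕜} {c : ℕ → 𝕜} {x : 𝕜} (h : HasFPowerSeriesAt f (.ofScalars 𝕜 c) x) (n : ℕ) :
    iteratedDeriv n f x / n.factorial = c n :=
  congrFun (FormalMultilinearSeries.ofScalars_series_injective 𝕜 𝕜
    (h.analyticAt.hasFPowerSeriesAt.eq_formalMultilinearSeries h)) n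

theorem norm_sub_sum_range_succ_le_of_hasSum {E : Type*} [NormedAddCommGroup E] {a : ℕ → E}
    {S : E} (hS : HasSum a S) {D b : ℝ} (hb : 1 < b) {m : ℕ}
    (ha : ∀ n, m + 1 ≤ n → ‖a n‖ ≤ D * b⁻¹ ^ n) :
    ‖S - ∑ k ∈ Finset.range (m + 1), a k‖ ≤ D * (1 / (b ^ m * (b - 1))) := by
  have hb₀ : 0 < b := one_pos.trans hb
  have hgeom : HasSum (fun i => D * b⁻¹ ^ (m + 1) * b⁻¹ ^ i) (D * (1 / (b ^ m * (b - 1)))) := by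
    have hsum : D * b⁻¹ ^ (m + 1) * (1 - b⁻¹)⁻¹ = D * (1 / (b ^ m * (b - 1))) := by
      have : b - 1 ≠ 0 := by linarith
      rw [inv_pow]
      field_simp
      ring
    exact hsum ▸ (hasSum_geometric_of_lt_one (by positivity) (inv_lt_one_of_one_lt₀ hb)).mul_left
      (D * b⁻¹ ^ (m + 1))
  refine ((hasSum_nat_add_iff' (m + 1)).2 hS).norm_le_of_bounded hgeom fun i => ?_
  simpa [pow_add, mul_assoc, mul_comm] using ha (i + (m + 1)) (Nat.le_add_left _ i)

theorem Complex.eqOn_of_exp_eq {U : Set ℂ} (hU : IsOpen U) (hU' : IsPreconnected U)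
    {F G : ℂ → ℂ} (hF : DifferentiableOn ℂ F U) (hG : DifferentiableOn ℂ G U)
    (hexp : ∀ w ∈ U, exp (F w) = exp (G w)) {x : ℂ} (hx : x ∈ U) (hFG : F x = G x) :
    Set.EqOn F G U := by
  refine hU.eqOn_of_deriv_eq hU' hF hG (fun v hv => ?_) hx hFG
  have hFv := (hF.differentiableAt (hU.mem_nhds hv)).hasDerivAt.cexp
  have hGv := (hG.differentiableAt (hU.mem_nhds hv)).hasDerivAt.cexp
  have hexp_near : (fun w => exp (F w)) =ᶠ[nhds v] fun w => exp (G w) :=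
    Filter.eventually_of_mem (hU.mem_nhds hv) hexp
  have := (hFv.congr_of_eventuallyEq hexp_near.symm).unique hGv
  rwa [hexp v hv, mul_right_inj' (exp_ne_zero _)] at this

/-- The `n`-th Taylor coefficient `-(∑_{ζ ∈ s} ζ⁻ⁿ) / n` of `w ↦ ∑_{ζ ∈ s} log (1 - w / ζ)`;
at `n = 0` the division by zero makes it `0`, which is the right value. -/
noncomputable def logCoeff (s : Multiset ℂ) (n : ℕ) : ℂ := -(s.map fun ζ => ζ⁻¹ ^ n).sum / n

theorem hasSum_log_one_sub_div {ζ w : ℂ} (h : ‖w‖ < ‖ζ‖) :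
    HasSum (fun n : ℕ => -(ζ⁻¹ ^ n / n) * w ^ n) (log (1 - w / ζ)) := by
  have hwζ : ‖w / ζ‖ < 1 := by
    rw [norm_div, div_lt_one ((norm_nonneg w).trans_lt h)]
    exact h
  have := (hasSum_taylorSeries_neg_log hwζ).neg
  rw [neg_neg] at this
  refine this.congr_fun fun n => ?_
  rw [div_pow]
  ring

theorem hasSum_logCoeff_mul_pow {s : Multiset ℂ} {w : ℂ} (hs : ∀ ζ ∈ s, ‖w‖ < ‖ζ‖) :
    HasSum (fun n => logCoeff s n * w ^ n) (s.map fun ζ => log (1 - w / ζ)).sum := by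
  induction s using Multiset.induction_on with
  | empty => simp [logCoeff, hasSum_zero]
  | cons ζ s ih =>
    have hζ := hasSum_log_one_sub_div (hs ζ (Multiset.mem_cons_self ζ s))
    convert hζ.add (ih fun η hη => hs η (Multiset.mem_cons_of_mem hη)) using 1
    · ext n
      simp only [logCoeff, Multiset.map_cons, Multiset.sum_cons]
      ring
    · simp

theorem norm_logCoeff_le {s : Multiset ℂ} {b : ℝ} (hb : 0 < b) (hs : ∀ ζ ∈ s, b ≤ ‖ζ‖) (n : ℕ) :
    ‖logCoeff s n‖ ≤ Multiset.card s / n * b⁻¹ ^ n := by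
  have hsum : ‖(s.map fun ζ => ζ⁻¹ ^ n).sum‖ ≤ Multiset.card s • b⁻¹ ^ n := by
    refine (norm_multiset_sum_le _).trans
      ((Multiset.sum_le_card_nsmul _ (b⁻¹ ^ n) ?_).trans_eq ?_)
    · simp only [Multiset.map_map, Function.comp_apply, Multiset.mem_map]
      rintro _ ⟨ζ, hζ, rfl⟩
      rw [norm_pow, norm_inv]
      exact pow_le_pow_left₀ (by positivity) (inv_anti₀ hb (hs ζ hζ)) n
    · simp
  rw [logCoeff, norm_div, norm_neg, Complex.norm_natCast, div_mul_eq_mul_div, ← nsmul_eq_mul]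
  exact div_le_div_of_nonneg_right hsum n.cast_nonneg

theorem exp_sum_log_one_sub_div {s : Multiset ℂ} {w : ℂ} (hs : ∀ ζ ∈ s, ‖w‖ < ‖ζ‖) :
    exp (s.map fun ζ => log (1 - w / ζ)).sum = (s.map fun ζ => 1 - w / ζ).prod := by
  rw [exp_multiset_sum, Multiset.map_map]
  refine congrArg _ (Multiset.map_congr rfl fun ζ hζ => exp_log fun h => ?_)
  have hwζ : w = ζ := by
    have hζ0 : ζ ≠ 0 := norm_pos_iff.1 ((norm_nonneg w).trans_lt (hs ζ hζ))
    field_simp at h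
    linear_combination -h
  exact (hs ζ hζ).ne (congrArg norm hwζ)

theorem hasFPowerSeriesOnBall_const_add_sum_log_one_sub_div {s : Multiset ℂ} {b : ℝ}
    (hb : 0 < b) (hs : ∀ ζ ∈ s, b ≤ ‖ζ‖) (a : ℂ) :
    HasFPowerSeriesOnBall (fun w => a + (s.map fun ζ => log (1 - w / ζ)).sum)
      (.ofScalars ℂ (Function.update (logCoeff s) 0 a)) 0 (.ofReal b) where
  r_le := by
    rw [ENNReal.ofReal_eq_coe_nnreal hb.le]
    refine FormalMultilinearSeries.le_radius_of_bound _ (max ‖a‖ (Multiset.card s)) fun n => ?_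
    rw [FormalMultilinearSeries.ofScalars_norm]
    rcases n.eq_zero_or_pos with rfl | hn
    · simp
    · rw [Function.update_of_ne hn.ne']
      calc ‖logCoeff s n‖ * b ^ n ≤ Multiset.card s / n * b⁻¹ ^ n * b ^ n :=
            mul_le_mul_of_nonneg_right (norm_logCoeff_le hb hs n) (by positivity)
        _ = Multiset.card s / n := by
            rw [mul_assoc, ← mul_pow, inv_mul_cancel₀ hb.ne', one_pow, mul_one]
        _ ≤ Multiset.card s := div_le_self (by positivity) (by exact_mod_cast hn)
        _ ≤ _ := le_max_right _ _
  r_pos := ENNReal.ofReal_pos.2 hb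
  hasSum {w} hw := by
    rw [eball_ofReal, mem_ball_zero_iff] at hw
    have hlog := hasSum_logCoeff_mul_pow fun ζ hζ => hw.trans_le (hs ζ hζ)
    rw [zero_add]
    refine ((hasSum_ite_eq 0 a).add hlog).congr_fun fun n => ?_
    rw [FormalMultilinearSeries.ofScalars_apply_eq, smul_eq_mul]
    rcases eq_or_ne n 0 with rfl | hn
    · simp [logCoeff]
    · simp [hn]

theorem eqOn_const_add_sum_log_one_sub_div_roots {g : ℂ[X]} {b : ℝ} (hb : 0 < b)
    (hg : ∀ z ∈ ball (0 : ℂ) b, g.eval z ≠ 0) {f : ℂ → ℂ} (hf : DifferentiableOn ℂ f (ball 0 b))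
    (hlog : ∀ z ∈ ball (0 : ℂ) b, exp (f z) = g.eval z) :
    Set.EqOn (fun w => f 0 + (g.roots.map fun ζ => log (1 - w / ζ)).sum) f (ball 0 b) := by
  have h0 : (0 : ℂ) ∈ ball 0 b := mem_ball_self hb
  have hs : ∀ ζ ∈ g.roots, b ≤ ‖ζ‖ := fun ζ => le_norm_of_mem_roots hg
  have hdiff := (hasFPowerSeriesOnBall_const_add_sum_log_one_sub_div hb hs (f 0)).differentiableOn
  rw [eball_ofReal] at hdiff
  refine eqOn_of_exp_eq isOpen_ball (convex_ball 0 b).isPreconnected hdiff hf (fun w hw => ?_) h0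
    (by simp)
  rw [exp_add, exp_sum_log_one_sub_div fun ζ hζ => (mem_ball_zero_iff.1 hw).trans_le (hs ζ hζ),
    hlog w hw, hlog 0 h0, (IsAlgClosed.splits g).eval_eq_eval_zero_mul_prod_one_sub_div (hg 0 h0) w]

theorem taylor_remainder_bound_log_polynomial_general
    (g : Polynomial ℂ) (N : ℕ) (hN : g.natDegree = N)
    (b : ℝ) (hb : 1 < b)
    (hroots : ∀ z ∈ closedBall (0 : ℂ) b, g.eval z ≠ 0)
    (f : ℂ → ℂ)
    (hf : DifferentiableOn ℂ f (closedBall 0 b))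
    (hlog : ∀ z ∈ closedBall (0 : ℂ) b, Complex.exp (f z) = g.eval z)
    (K : ℕ) :
    ∀ z : ℂ, ‖z‖ ≤ 1 →
      ‖f z - ∑ k ∈ Finset.range (K + 1),
          (iteratedDeriv k f 0 / (Nat.factorial k : ℂ)) * z ^ k‖
        ≤ ((N : ℝ) / (K + 1)) * (1 / (b ^ K * (b - 1))) := by
  intro z hz
  have hb₀ : 0 < b := one_pos.trans hb
  have hg : ∀ w ∈ ball (0 : ℂ) b, g.eval w ≠ 0 := fun w hw => hroots w (ball_subset_closedBall hw)
  have hs : ∀ ζ ∈ g.roots, b ≤ ‖ζ‖ := fun ζ => le_norm_of_mem_roots hg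
  have hfSeries := (hasFPowerSeriesOnBall_const_add_sum_log_one_sub_div hb₀ hs (f 0)).congr <| by
    rw [eball_ofReal]
    exact eqOn_const_add_sum_log_one_sub_div_roots hb₀ hg (hf.mono ball_subset_closedBall)
      fun w hw => hlog w (ball_subset_closedBall hw)
  simp_rw [hfSeries.hasFPowerSeriesAt.iteratedDeriv_div_factorial_eq]
  have hsum := hfSeries.hasSum (y := z) (by simpa [eball_ofReal] using hz.trans_lt hb)
  simp only [FormalMultilinearSeries.ofScalars_apply_eq, smul_eq_mul, zero_add] at hsum
  refine norm_sub_sum_range_succ_le_of_hasSum hsum hb fun n hn => ?_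
  have hcard : (Multiset.card g.roots : ℝ) ≤ N := by exact_mod_cast hN ▸ g.card_roots'
  have hKn : (K : ℝ) + 1 ≤ n := by exact_mod_cast hn
  rw [Function.update_of_ne (by omega), norm_mul, norm_pow]
  calc ‖logCoeff g.roots n‖ * ‖z‖ ^ n ≤ ‖logCoeff g.roots n‖ :=
        mul_le_of_le_one_right (norm_nonneg _) (pow_le_one₀ (norm_nonneg z) hz)
    _ ≤ Multiset.card g.roots / n * b⁻¹ ^ n := norm_logCoeff_le hb₀ hs n
    _ ≤ N / (K + 1) * b⁻¹ ^ n := by gcongr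

/-- Truncated Taylor series bound for the logarithm of a nonvanishing polynomial
(Prop. 3.3 (3), Barvinok). -/
theorem taylor_remainder_bound_log_polynomial
    (g : Polynomial ℂ) (N : ℕ) (hN : g.natDegree = N)
    (hg0 : g.eval 0 ≠ 0)
    (b : ℝ) (hb : 1 < b)
    (hroots : ∀ z ∈ closedBall (0 : ℂ) b, g.eval z ≠ 0)
    (f : ℂ → ℂ)
    (hf : DifferentiableOn ℂ f (closedBall 0 b))
    (hlog : ∀ z ∈ closedBall (0 : ℂ) b, Complex.exp (f z) = g.eval z)
    (K : ℕ) :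
    ∀ z : ℂ, ‖z‖ ≤ 1 →
      ‖f z - ∑ k ∈ Finset.range (K + 1),
          (iteratedDeriv k f 0 / (Nat.factorial k : ℂ)) * z ^ k‖
        ≤ ((N : ℝ) / (K + 1)) * (1 / (b ^ K * (b - 1))) :=
  taylor_remainder_bound_log_polynomial_general g N hN b hb hroots f hf hlog K
end

section
/- Golden–Thompson inequality: for any two Hermitian matrices A and B on a finite-dimensional Hilbert space, Tr(exp(A + B)) ≤ Tr(exp(A) · exp(B)). -/
/-!
Two ingredients. First, for Hermitian `X, Y` the trace inequality
`Re Tr (XY)^(2^k) ≤ Re Tr X^(2^k) Y^(2^k)` holds: with `Z = (XY)^m`, Cauchy–Schwarz for the trace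
bounds `Tr Z²` by `Tr Z Zᴴ = Tr (XY)^m (YX)^m`, and the companion inequality
`Tr C^m Cᴴ^m ≤ Tr (C Cᴴ)^m` turns this into `Tr (X² Y²)^m`, halving the exponent.
Second, the Lie product formula `(exp (A/n) exp (B/n))^n → exp (A + B)`, since the one-step error
`exp (tA) exp (tB) - exp (t(A+B))` is `o(t)`. Applied to `X = exp (2^-k A)`, `Y = exp (2^-k B)`,
the first bounds every term of the Lie product sequence by `Re Tr (exp A exp B)`, and the second
identifies the limit as `Re Tr exp (A + B)`.
-/

open NormedSpace Filter Topology Asymptotics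
open scoped ComplexOrder

lemma norm_pow_succ_sub_pow_succ_le {R : Type*} [NormedRing R] {X Y : R} {M : ℝ}
    (hX : ‖X‖ ≤ M) (hY : ‖Y‖ ≤ M) (n : ℕ) :
    ‖X ^ (n + 1) - Y ^ (n + 1)‖ ≤ (n + 1) * M ^ n * ‖X - Y‖ := by
  induction n with
  | zero => simp
  | succ n ih =>
    have hM : 0 ≤ M := (norm_nonneg X).trans hX
    have hYn : ‖Y ^ (n + 1)‖ ≤ M ^ (n + 1) :=
      (norm_pow_le' Y n.succ_pos).trans (pow_le_pow_left₀ (norm_nonneg Y) hY _)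
    calc ‖X ^ (n + 1 + 1) - Y ^ (n + 1 + 1)‖
        = ‖X * (X ^ (n + 1) - Y ^ (n + 1)) + (X - Y) * Y ^ (n + 1)‖ := by
          rw [mul_sub, sub_mul, ← pow_succ', ← pow_succ', sub_add_sub_cancel]
      _ ≤ ‖X‖ * ‖X ^ (n + 1) - Y ^ (n + 1)‖ + ‖X - Y‖ * ‖Y ^ (n + 1)‖ :=
          (norm_add_le _ _).trans (add_le_add (norm_mul_le _ _) (norm_mul_le _ _))
      _ ≤ M * ((n + 1) * M ^ n * ‖X - Y‖) + ‖X - Y‖ * M ^ (n + 1) := by gcongr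
      _ = (↑(n + 1) + 1) * M ^ (n + 1) * ‖X - Y‖ := by push_cast; ring

section LieProductFormula

variable {𝔸 : Type*} [NormedRing 𝔸] [NormedAlgebra ℝ 𝔸]

lemma exp_inv_natCast_smul_pow [CompleteSpace 𝔸] {n : ℕ} (hn : n ≠ 0) (x : 𝔸) :
    exp ((n : ℝ)⁻¹ • x) ^ n = exp x := by
  let : NormedAlgebra ℚ 𝔸 := .restrictScalars ℚ ℝ 𝔸
  rw [← exp_nsmul, ← Nat.cast_smul_eq_nsmul ℝ, smul_smul, mul_inv_cancel₀ (Nat.cast_ne_zero.2 hn),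
    one_smul]

lemma isLittleO_exp_smul_mul_exp_smul_sub_exp_smul_add [CompleteSpace 𝔸] (A B : 𝔸) :
    (fun t : ℝ => exp (t • A) * exp (t • B) - exp (t • (A + B))) =o[𝓝 0] fun t => t := by
  have h := ((hasDerivAt_exp_smul_const A (0 : ℝ)).mul (hasDerivAt_exp_smul_const B 0)).sub
    (hasDerivAt_exp_smul_const (A + B) 0)
  simp only [zero_smul, exp_zero, one_mul, mul_one, sub_self] at h
  simpa only [Pi.sub_apply, Pi.mul_apply, zero_add, zero_smul, exp_zero, mul_one, sub_self,
    sub_zero, smul_zero] using hasDerivAt_iff_isLittleO_nhds_zero.1 h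

lemma norm_exp_le_exp_norm [NormOneClass 𝔸] (x : 𝔸) : ‖exp x‖ ≤ Real.exp ‖x‖ := by
  rw [exp_eq_tsum ℝ, Real.exp_eq_exp_ℝ, exp_eq_tsum_div]
  refine (norm_tsum_le_tsum_norm (norm_expSeries_summable' x)).trans ?_
  refine (norm_expSeries_summable' x).tsum_le_tsum (fun k => ?_)
    (Real.summable_pow_div_factorial ‖x‖)
  rw [norm_smul, norm_inv, Real.norm_natCast, inv_mul_eq_div]
  gcongr
  exact norm_pow_le x k

lemma norm_exp_smul_le [NormOneClass 𝔸] {t : ℝ} (ht : 0 ≤ t) (x : 𝔸) :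
    ‖exp (t • x)‖ ≤ Real.exp (t * ‖x‖) := by
  simpa only [norm_smul, Real.norm_of_nonneg ht] using norm_exp_le_exp_norm (t • x)

theorem tendsto_exp_inv_smul_mul_exp_inv_smul_pow [NormOneClass 𝔸] [CompleteSpace 𝔸] (A B : 𝔸) :
    Tendsto (fun n : ℕ => (exp ((n : ℝ)⁻¹ • A) * exp ((n : ℝ)⁻¹ • B)) ^ n) atTop
      (𝓝 (exp (A + B))) := by
  set g := fun t : ℝ => exp (t • A) * exp (t • B) - exp (t • (A + B))
  have hg : Tendsto (fun n : ℕ => n * ‖g (n : ℝ)⁻¹‖) atTop (𝓝 0) := by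
    have h := ((isLittleO_exp_smul_mul_exp_smul_sub_exp_smul_add A B).comp_tendsto
      tendsto_inv_atTop_nhds_zero_nat).norm_left.tendsto_div_nhds_zero
    simpa only [Function.comp_def, div_inv_eq_mul, mul_comm] using h
  rw [tendsto_iff_norm_sub_tendsto_zero]
  refine squeeze_zero' (.of_forall fun _ => norm_nonneg _) ?_
    (by simpa only [mul_zero] using hg.const_mul (Real.exp (‖A‖ + ‖B‖)))
  filter_upwards [eventually_ne_atTop 0] with n hn
  obtain ⟨m, rfl⟩ := Nat.exists_eq_succ_of_ne_zero hn
  set t : ℝ := ((m + 1 : ℕ) : ℝ)⁻¹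
  have ht : 0 ≤ t := by positivity
  have hmt : ((m + 1 : ℕ) : ℝ) * t = 1 := mul_inv_cancel₀ (by positivity)
  set M := Real.exp (t * (‖A‖ + ‖B‖))
  have hX : ‖exp (t • A) * exp (t • B)‖ ≤ M := calc
    _ ≤ Real.exp (t * ‖A‖) * Real.exp (t * ‖B‖) := (norm_mul_le _ _).trans
      (by gcongr <;> exact norm_exp_smul_le ht _)
    _ = M := by rw [← Real.exp_add, ← mul_add]
  have hY : ‖exp (t • (A + B))‖ ≤ M := (norm_exp_smul_le ht _).trans
    (Real.exp_le_exp.2 (mul_le_mul_of_nonneg_left (norm_add_le A B) ht))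
  have hM : M ^ m ≤ Real.exp (‖A‖ + ‖B‖) := calc
    M ^ m ≤ M ^ (m + 1) := pow_le_pow_right₀ (Real.one_le_exp (by positivity)) m.le_succ
    _ = Real.exp (‖A‖ + ‖B‖) := by
      rw [← Real.exp_nat_mul, ← mul_assoc, hmt, one_mul]
  calc ‖(exp (t • A) * exp (t • B)) ^ (m + 1) - exp (A + B)‖
      = ‖(exp (t • A) * exp (t • B)) ^ (m + 1) - exp (t • (A + B)) ^ (m + 1)‖ := by
        rw [exp_inv_natCast_smul_pow m.succ_ne_zero]
    _ ≤ (m + 1) * M ^ m * ‖g t‖ := norm_pow_succ_sub_pow_succ_le hX hY m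
    _ ≤ Real.exp (‖A‖ + ‖B‖) * ((m + 1 : ℕ) * ‖g t‖) := by
      rw [Nat.cast_succ, mul_comm _ (M ^ m), mul_assoc]
      gcongr

end LieProductFormula

namespace Matrix

variable {n 𝕜 : Type*} [Fintype n] [RCLike 𝕜]

open RCLike

lemma re_trace_mul_conjTranspose_nonneg (C : Matrix n n 𝕜) : 0 ≤ re (C * Cᴴ).trace :=
  (RCLike.nonneg_iff.mp (posSemidef_self_mul_conjTranspose C).trace_nonneg).1

lemma re_trace_mul_le_sqrt_mul_sqrt (U V : Matrix n n 𝕜) :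
    re (U * V).trace ≤ √(re (U * Uᴴ).trace) * √(re (V * Vᴴ).trace) := by
  classical
  let := toMatrixSeminormedAddCommGroup (1 : Matrix n n 𝕜) PosSemidef.one
  let := toMatrixInnerProductSpace (1 : Matrix n n 𝕜) PosSemidef.one
  have h := re_inner_le_norm (𝕜 := 𝕜) Uᴴ V
  rw [norm_eq_sqrt_re_inner (𝕜 := 𝕜), norm_eq_sqrt_re_inner (𝕜 := 𝕜)] at h
  change re (V * 1 * Uᴴᴴ).trace ≤ √(re (Uᴴ * 1 * Uᴴᴴ).trace) * √(re (V * 1 * Vᴴ).trace) at h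
  simpa only [Matrix.mul_one, conjTranspose_conjTranspose, trace_mul_comm V, trace_mul_comm Uᴴ]
    using h

lemma re_trace_mul_self_le (C : Matrix n n 𝕜) : re (C * C).trace ≤ re (C * Cᴴ).trace := by
  simpa only [Real.mul_self_sqrt (re_trace_mul_conjTranspose_nonneg C)]
    using re_trace_mul_le_sqrt_mul_sqrt C C

lemma trace_mul_pow_comm {R : Type*} [CommSemiring R] [DecidableEq n] (P Q : Matrix n n R)
    (m : ℕ) : ((P * Q) ^ m).trace = ((Q * P) ^ m).trace := by
  cases m with
  | zero => rfl
  | succ m =>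
    rw [pow_succ, ← mul_assoc, mul_pow_mul, mul_assoc, trace_mul_comm, pow_succ, mul_assoc]

variable [DecidableEq n] {m : ℕ}

lemma IsHermitian.re_trace_mul_pow_two_mul_le
    (hS : ∀ X Y : Matrix n n 𝕜, X.IsHermitian → Y.IsHermitian →
      re ((X * Y) ^ m).trace ≤ re (X ^ m * Y ^ m).trace)
    (hT : ∀ C : Matrix n n 𝕜, re (C ^ m * Cᴴ ^ m).trace ≤ re ((C * Cᴴ) ^ m).trace)
    {X Y : Matrix n n 𝕜} (hX : X.IsHermitian) (hY : Y.IsHermitian) :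
    re ((X * Y) ^ (2 * m)).trace ≤ re (X ^ (2 * m) * Y ^ (2 * m)).trace :=
  calc re ((X * Y) ^ (2 * m)).trace
      = re ((X * Y) ^ m * (X * Y) ^ m).trace := by rw [two_mul, pow_add]
    _ ≤ re ((X * Y) ^ m * (X * Y)ᴴ ^ m).trace := by
      simpa only [conjTranspose_pow] using re_trace_mul_self_le ((X * Y) ^ m)
    _ ≤ re ((X * Y * (X * Y)ᴴ) ^ m).trace := hT (X * Y)
    _ = re ((X ^ 2 * Y ^ 2) ^ m).trace := by
      rw [conjTranspose_mul, hX.eq, hY.eq, ← mul_assoc, mul_assoc X, trace_mul_pow_comm,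
        ← mul_assoc, sq, sq]
    _ ≤ re ((X ^ 2) ^ m * (Y ^ 2) ^ m).trace := hS _ _ (hX.pow 2) (hY.pow 2)
    _ = re (X ^ (2 * m) * Y ^ (2 * m)).trace := by rw [pow_mul, pow_mul]

lemma re_trace_pow_mul_conjTranspose_pow_two_mul_le
    (hS : ∀ X Y : Matrix n n 𝕜, X.IsHermitian → Y.IsHermitian →
      re ((X * Y) ^ m).trace ≤ re (X ^ m * Y ^ m).trace)
    (hT : ∀ C : Matrix n n 𝕜, re (C ^ m * Cᴴ ^ m).trace ≤ re ((C * Cᴴ) ^ m).trace)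
    (C : Matrix n n 𝕜) :
    re (C ^ (2 * m) * Cᴴ ^ (2 * m)).trace ≤ re ((C * Cᴴ) ^ (2 * m)).trace := by
  set P := C * Cᴴ
  set Q := Cᴴ * C
  have hP : P.IsHermitian := isHermitian_mul_conjTranspose_self C
  have hQ : Q.IsHermitian := isHermitian_conjTranspose_mul_self C
  have hPm : P ^ (2 * m) = P ^ m * (P ^ m)ᴴ := by
    rw [conjTranspose_pow, hP.eq, two_mul, pow_add]
  have hQm : Q ^ (2 * m) = Q ^ m * (Q ^ m)ᴴ := by
    rw [conjTranspose_pow, hQ.eq, two_mul, pow_add]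
  have hPQ : (Q ^ (2 * m)).trace = (P ^ (2 * m)).trace := trace_mul_pow_comm Cᴴ C _
  calc re (C ^ (2 * m) * Cᴴ ^ (2 * m)).trace
      = re ((C ^ 2) ^ m * (C ^ 2)ᴴ ^ m).trace := by rw [conjTranspose_pow, pow_mul, pow_mul]
    _ ≤ re ((C ^ 2 * (C ^ 2)ᴴ) ^ m).trace := hT (C ^ 2)
    _ = re ((P * Q) ^ m).trace := by
      rw [conjTranspose_pow, sq, sq, ← mul_assoc, mul_assoc C C, mul_assoc C, trace_mul_pow_comm]
      simp only [P, Q, mul_assoc]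
    _ ≤ re (P ^ m * Q ^ m).trace := hS P Q hP hQ
    -- `P = C Cᴴ` and `Q = Cᴴ C` have the same power traces, so Cauchy–Schwarz is sharp enough here.
    _ ≤ √(re (P ^ (2 * m)).trace) * √(re (Q ^ (2 * m)).trace) := by
      rw [hPm, hQm]
      exact re_trace_mul_le_sqrt_mul_sqrt _ _
    _ = re (P ^ (2 * m)).trace := by
      rw [hPQ, Real.mul_self_sqrt (hPm ▸ re_trace_mul_conjTranspose_nonneg _)]

-- Each of the two inequalities needs the other at half the exponent.
lemma trace_pow_two_pow_inequalities (k : ℕ) :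
    (∀ X Y : Matrix n n 𝕜, X.IsHermitian → Y.IsHermitian →
      re ((X * Y) ^ 2 ^ k).trace ≤ re (X ^ 2 ^ k * Y ^ 2 ^ k).trace) ∧
    ∀ C : Matrix n n 𝕜, re (C ^ 2 ^ k * Cᴴ ^ 2 ^ k).trace ≤ re ((C * Cᴴ) ^ 2 ^ k).trace := by
  induction k with
  | zero => simp
  | succ k ih =>
    rw [pow_succ']
    exact ⟨fun X Y hX hY => hX.re_trace_mul_pow_two_mul_le ih.1 ih.2 hY,
      re_trace_pow_mul_conjTranspose_pow_two_mul_le ih.1 ih.2⟩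

lemma IsHermitian.re_trace_mul_pow_two_pow_le {X Y : Matrix n n 𝕜} (hX : X.IsHermitian)
    (hY : Y.IsHermitian) (k : ℕ) :
    re ((X * Y) ^ 2 ^ k).trace ≤ re (X ^ 2 ^ k * Y ^ 2 ^ k).trace :=
  (trace_pow_two_pow_inequalities k).1 X Y hX hY

lemma exp_inv_natCast_smul_pow {m : ℕ} (hm : m ≠ 0) (A : Matrix n n 𝕜) :
    exp ((m : ℝ)⁻¹ • A) ^ m = exp A := by
  rw [← exp_nsmul, ← Nat.cast_smul_eq_nsmul ℝ, smul_smul, mul_inv_cancel₀ (Nat.cast_ne_zero.2 hm),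
    one_smul]

theorem tendsto_exp_inv_smul_mul_exp_inv_smul_pow (A B : Matrix n n 𝕜) :
    Tendsto (fun m : ℕ => (exp ((m : ℝ)⁻¹ • A) * exp ((m : ℝ)⁻¹ • B)) ^ m) atTop
      (𝓝 (exp (A + B))) := by
  cases isEmpty_or_nonempty n
  · exact tendsto_const_nhds.congr fun _ => Subsingleton.elim _ _
  · open scoped Norms.Operator in
    exact _root_.tendsto_exp_inv_smul_mul_exp_inv_smul_pow A B

end Matrix

/-- Golden–Thompson inequality: for Hermitian matrices `A, B`,
`Tr(exp(A + B)) ≤ Tr(exp A · exp B)`. -/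
theorem golden_thompson
    {d : ℕ} (A B : Matrix (Fin d) (Fin d) ℂ)
    (hA : A.IsHermitian) (hB : B.IsHermitian) :
    (exp (A + B)).trace.re ≤ ((exp A) * (exp B)).trace.re := by
  have hlim := (Complex.continuous_re.comp continuous_id.matrix_trace).continuousAt.tendsto.comp
    ((Matrix.tendsto_exp_inv_smul_mul_exp_inv_smul_pow A B).comp
      (tendsto_pow_atTop_atTop_of_one_lt one_lt_two))
  refine le_of_tendsto' hlim fun k => ?_
  have hpow : 2 ^ k ≠ 0 := pow_ne_zero k two_ne_zero
  set t : ℝ := ((2 ^ k : ℕ) : ℝ)⁻¹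
  have hX := (hA.smul (IsSelfAdjoint.all t)).exp
  have hY := (hB.smul (IsSelfAdjoint.all t)).exp
  calc ((exp (t • A) * exp (t • B)) ^ 2 ^ k).trace.re
      ≤ (exp (t • A) ^ 2 ^ k * exp (t • B) ^ 2 ^ k).trace.re :=
        hX.re_trace_mul_pow_two_pow_le hY k
    _ = (exp A * exp B).trace.re := by
      rw [Matrix.exp_inv_natCast_smul_pow hpow, Matrix.exp_inv_natCast_smul_pow hpow]
end
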